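/- Let n ≥ 1, S ⊆ Fin n, t ∈ Fin n, and let σ be a bijection of (Fin n → ZMod 2) with (σ x) t = parity_S(x) for all x, inducing permutation operator V on ℋ_n. Let θ : ℝ and let Z_t(θ) be the diagonal operator multiplying δ_x by exp(iθ) when x t = 1 and fixing it when x t = 0. Let D_S be the diagonal operator multiplying δ_x by (−1)^{parity_S(x)}. If v₀, v₁ ∈ ℋ_n satisfy D_S v₀ = v₀ and D_S v₁ = −v₁, then (V⁻¹ ∘ Z_t(θ) ∘ V) v₀ = v₀ and (V⁻¹ ∘ Z_t(θ) ∘ V) v₁ = exp(iθ) · v₁; that is, conjugating a single physical Z(θ) gate on qubit t by the staircase circuit implements the logical gate Z(θ) on the code space spanned by v₀ and v₁, coupling only the qubits in S. -/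
import Mathlib


/-- Core content of the paper's Theorem (k = 0 case): conjugating a single physical
`Z(θ)` gate on qubit `t` by the staircase circuit `V` implements the logical gate
`Z(θ)` on the code space spanned by the codewords `v₀, v₁` (eigenvectors of the
logical-Z operator `D_S`), coupling only the qubits in `S`. -/
theorem staircase_conj_Z_theta_is_logical_Z_theta (n : ℕ) (hn : 1 ≤ n)
    (S : Finset (Fin n)) (t : Fin n) (θ : ℝ)
    (σ : (Fin n → ZMod 2) ≃ (Fin n → ZMod 2))
    (hσ : ∀ x, σ x t = ∑ i ∈ S, x i)
    (V : ((Fin n → ZMod 2) → ℂ) ≃ ((Fin n → ZMod 2) → ℂ))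
    (hV : ∀ f y, V f y = f (σ.symm y))
    (Zt : ((Fin n → ZMod 2) → ℂ) → ((Fin n → ZMod 2) → ℂ))
    (hZt : ∀ f x, Zt f x = (if x t = 1 then Complex.exp (θ * Complex.I) else 1) * f x)
    (D : ((Fin n → ZMod 2) → ℂ) → ((Fin n → ZMod 2) → ℂ))
    (hD : ∀ f x, D f x = (if (∑ i ∈ S, x i) = 1 then (-1 : ℂ) else 1) * f x)
    (v₀ v₁ : (Fin n → ZMod 2) → ℂ)
    (h₀ : D v₀ = v₀) (h₁ : D v₁ = -v₁) :
    V.symm (Zt (V v₀)) = v₀ ∧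
    V.symm (Zt (V v₁)) = Complex.exp (θ * Complex.I) • v₁ := by

  -- V.symm g x = g (σ x)
  have hVsymm : ∀ (g : (Fin n → ZMod 2) → ℂ) x, V.symm g x = g (σ x) := by
    intro g x
    have : V (V.symm g) (σ x) = g (σ x) := by rw [Equiv.apply_symm_apply]
    rw [hV] at this
    simpa using this
  have key : ∀ (f : (Fin n → ZMod 2) → ℂ) x,
      V.symm (Zt (V f)) x
        = (if (∑ i ∈ S, x i) = 1 then Complex.exp (θ * Complex.I) else 1) * f x := by
    intro f x
    rw [hVsymm, hZt, hσ, hV, Equiv.symm_apply_apply]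
  constructor
  · funext x
    rw [key]
    by_cases h : (∑ i ∈ S, x i) = 1
    · have := congrFun h₀ x
      rw [hD, if_pos h] at this
      have hz : v₀ x = 0 := by linear_combination (-1/2 : ℂ) * this
      simp [h, hz]
    · simp [h]
  · funext x
    rw [key]
    by_cases h : (∑ i ∈ S, x i) = 1
    · simp [h]
    · have := congrFun h₁ x
      rw [hD, if_neg h] at this
      simp only [Pi.neg_apply, one_mul] at this
      have hz : v₁ x = 0 := by linear_combination (1/2 : ℂ) * this
      simp [h, hz]
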